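/- Let H be a (real or complex) Hilbert space, let (g_m)_{m∈ℕ} be a sequence in H, and let C ≥ 0. Suppose that for every finite subset F ⊆ ℕ and every choice of signs ε : F → {−1, +1} one has ‖ Σ_{m∈F} ε_m g_m ‖ ≤ C. Then the partial sums Σ_{m=0}^{N} g_m form a Cauchy sequence, i.e., the series Σ_{m∈ℕ} g_m converges in H. -/

import Mathlib

/-!
By the parallelogram law, `‖x + y‖² + ‖x - y‖² = 2(‖x‖² + ‖y‖²)`, so one of the signs gives
`‖x ± y‖² ≥ ‖x‖² + ‖y‖²`; choosing signs greedily, any `K` pairwise disjoint blocks of the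
series admit a signed sum whose squared norm dominates the sum of the squared norms of the
blocks. If the series violated the Cauchy criterion for unconditional summability at scale
`δ`, we could pick infinitely many pairwise disjoint blocks of norm at least `δ`, and a signed
sum over `K > C² / δ²` of them would have norm exceeding `C`. Hence the series is even
unconditionally summable, and in particular its partial sums converge.
-/

open Finset Filter Function Topology

lemma pairwise_disjoint_apply_iterate_union {ι : Type*} [DecidableEq ι]
    (T : Finset ι → Finset ι) (hT : ∀ s, Disjoint (T s) s) (s₀ : Finset ι) :
    Pairwise (Disjoint on fun k => T ((fun s => s ∪ T s)^[k] s₀)) := by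
  set U : ℕ → Finset ι := fun k => (fun s => s ∪ T s)^[k] s₀ with hU
  have hmono : Monotone U := monotone_nat_of_le_succ fun k => by
    simp only [hU, iterate_succ_apply']
    exact subset_union_left
  refine (pairwise_disjoint_on _).2 fun j k hjk => (hT (U k)).symm.mono_left ?_
  calc T (U j) ⊆ U (j + 1) := by
        simp only [hU, iterate_succ_apply']
        exact subset_union_right
    _ ⊆ U k := hmono hjk

section Signs

variable {𝕜 E ι : Type*} [RCLike 𝕜] [NormedAddCommGroup E] [InnerProductSpace 𝕜 E]

lemma exists_sign_norm_sq_add_le_norm_add_smul_sq (x y : E) :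
    ∃ σ : 𝕜, (σ = 1 ∨ σ = -1) ∧ ‖x‖ ^ 2 + ‖y‖ ^ 2 ≤ ‖x + σ • y‖ ^ 2 := by
  have hpar := parallelogram_law_with_norm 𝕜 x y
  by_cases h : ‖x‖ ^ 2 + ‖y‖ ^ 2 ≤ ‖x + y‖ ^ 2
  · exact ⟨1, .inl rfl, by simpa using h⟩
  · refine ⟨-1, .inr rfl, ?_⟩
    rw [neg_one_smul, ← sub_eq_add_neg]
    nlinarith

variable [DecidableEq ι]

lemma exists_signs_sum_norm_sq_le (g : ι → E) (t : ℕ → Finset ι)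
    (ht : Pairwise (Disjoint on t)) (K : ℕ) :
    ∃ ε : ι → 𝕜, (∀ i, ε i = 1 ∨ ε i = -1) ∧
      ∑ k ∈ range K, ‖∑ i ∈ t k, g i‖ ^ 2 ≤
        ‖∑ i ∈ (range K).biUnion t, ε i • g i‖ ^ 2 := by
  induction K with
  | zero => exact ⟨fun _ => 1, fun _ => .inl rfl, by simp⟩
  | succ K ih =>
    obtain ⟨ε, hε, hle⟩ := ih
    obtain ⟨σ, hσ, hσle⟩ := exists_sign_norm_sq_add_le_norm_add_smul_sq (𝕜 := 𝕜)
      (∑ i ∈ (range K).biUnion t, ε i • g i) (∑ i ∈ t K, g i)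
    have hdisj : Disjoint ((range K).biUnion t) (t K) :=
      (disjoint_biUnion_left _ _ _).2 fun k hk => ht (mem_range.1 hk).ne
    refine ⟨fun i => if i ∈ t K then σ else ε i,
      fun i => by dsimp only; split_ifs <;> simp [hσ, hε], ?_⟩
    have hold : ∑ i ∈ (range K).biUnion t, (if i ∈ t K then σ else ε i) • g i =
        ∑ i ∈ (range K).biUnion t, ε i • g i :=
      sum_congr rfl fun i hi => by rw [if_neg (disjoint_left.1 hdisj hi)]
    have hnew : ∑ i ∈ t K, (if i ∈ t K then σ else ε i) • g i = σ • ∑ i ∈ t K, g i := by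
      rw [smul_sum]
      exact sum_congr rfl fun i hi => by rw [if_pos hi]
    rw [sum_range_succ, range_add_one, biUnion_insert, union_comm, sum_union hdisj, hold, hnew]
    linarith

theorem summable_of_norm_sum_signed_le [CompleteSpace E] (g : ι → E) (C : ℝ)
    (hbound : ∀ (F : Finset ι) (ε : ι → 𝕜), (∀ i, ε i = 1 ∨ ε i = -1) →
      ‖∑ i ∈ F, ε i • g i‖ ≤ C) :
    Summable g := by
  refine summable_iff_vanishing_norm.2 fun δ hδ => ?_
  by_contra! hfar
  choose T hTdisj hTδ using hfar
  set blocks : ℕ → Finset ι := fun k => T ((fun s => s ∪ T s)^[k] ∅)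
  have hblocks : Pairwise (Disjoint on blocks) :=
    pairwise_disjoint_apply_iterate_union T hTdisj ∅
  obtain ⟨K, hK⟩ := exists_nat_gt (C ^ 2 / δ ^ 2)
  obtain ⟨ε, hε, hle⟩ := exists_signs_sum_norm_sq_le (𝕜 := 𝕜) g _ hblocks K
  have hlower : (K : ℝ) * δ ^ 2 ≤ ∑ k ∈ range K, ‖∑ i ∈ blocks k, g i‖ ^ 2 :=
    calc (K : ℝ) * δ ^ 2 = ∑ _k ∈ range K, δ ^ 2 := by simp
      _ ≤ _ := sum_le_sum fun k _ => pow_le_pow_left₀ hδ.le (hTδ _) 2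
  have hupper := pow_le_pow_left₀ (norm_nonneg _) (hbound ((range K).biUnion blocks) ε hε) 2
  rw [div_lt_iff₀ (by positivity)] at hK
  linarith

end Signs

theorem stmt_8 {𝕜 : Type*} [RCLike 𝕜] {H : Type*} [NormedAddCommGroup H]
    [InnerProductSpace 𝕜 H] [CompleteSpace H]
    (g : ℕ → H) (C : ℝ)
    (hbound : ∀ (F : Finset ℕ) (ε : ℕ → 𝕜), (∀ m, ε m = 1 ∨ ε m = -1) →
      ‖∑ m ∈ F, ε m • g m‖ ≤ C) :
    CauchySeq (fun N => ∑ m ∈ Finset.range (N + 1), g m) ∧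
      ∃ S : H, Filter.Tendsto (fun N => ∑ m ∈ Finset.range (N + 1), g m)
        Filter.atTop (nhds S) := by
  obtain ⟨S, hS⟩ := summable_of_norm_sum_signed_le g C hbound
  have hpartial : Tendsto (fun N => ∑ m ∈ range (N + 1), g m) atTop (𝓝 S) :=
    (tendsto_add_atTop_iff_nat 1).2 hS.tendsto_sum_nat
  exact ⟨hpartial.cauchySeq, S, hpartial⟩
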